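/- arXiv:2312.04155 — 2 statements merged into one kernel-verified Lean document; each statement's English description precedes it below -/
import Mathlib

section
/- Let a > 0 and c > 0 be constants. The secrecy-rate function f(p, B) = B·log₂(1 + a·p/B) − B·log₂(1 + c/B) is neither convex nor concave on the open positive quadrant {(p, B) ∈ ℝ² : p > 0, B > 0}; that is, f is not convex on this set and f is not concave on this set. -/
lemma log2pos' : (0:ℝ) < Real.log 2 := Real.log_pos (by norm_num)

lemma key1' : (3:ℝ)/2 < Real.logb 2 3 := by
  rw [Real.logb, lt_div_iff₀ log2pos']
  have h : Real.log 8 < Real.log 9 := Real.log_lt_log (by norm_num) (by norm_num)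
  have h8 : Real.log 8 = 3 * Real.log 2 := by
    rw [show (8:ℝ) = 2^3 by norm_num, Real.log_pow]; push_cast; ring
  have h9 : Real.log 9 = 2 * Real.log 3 := by
    rw [show (9:ℝ) = 3^2 by norm_num, Real.log_pow]; push_cast; ring
  nlinarith

lemma key2' : 1/2 + (3:ℝ)/2 * Real.logb 2 (4/3) < 2 * Real.logb 2 (3/2) := by
  have h : Real.log (128/27) < Real.log (81/16) :=
    Real.log_lt_log (by norm_num) (by norm_num)
  have h1 : Real.log (81/16) = 4 * Real.log (3/2) := by
    rw [show (81/16:ℝ) = (3/2)^4 by norm_num, Real.log_pow]; push_cast; ring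
  have h2 : Real.log (128/27) = Real.log 2 + 3 * Real.log (4/3) := by
    rw [show (128/27:ℝ) = 2 * (4/3)^3 by norm_num, Real.log_mul (by norm_num) (by norm_num),
      Real.log_pow]; push_cast; ring
  rw [Real.logb, Real.logb,
    show 1/2 + (3:ℝ)/2 * (Real.log (4/3) / Real.log 2)
      = (Real.log 2 + 3 * Real.log (4/3)) / (2 * Real.log 2) by
        field_simp,
    show 2 * (Real.log (3/2) / Real.log 2) = 4 * Real.log (3/2) / (2 * Real.log 2) by
        rw [mul_div_assoc]; ring_nf,
    div_lt_div_iff₀ (by positivity) (by positivity)]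
  nlinarith [log2pos']

/-- For constants `a > 0` and `c > 0`, the secrecy-rate function
`f(p, B) = B * log₂ (1 + a * p / B) - B * log₂ (1 + c / B)` is neither convex nor concave
on the open positive quadrant. -/
theorem secrecy_rate_neither_convex_nor_concave (a c : ℝ) (ha : 0 < a) (hc : 0 < c) :
    ¬ ConvexOn ℝ {x : ℝ × ℝ | 0 < x.1 ∧ 0 < x.2}
        (fun x : ℝ × ℝ =>
          x.2 * Real.logb 2 (1 + a * x.1 / x.2) - x.2 * Real.logb 2 (1 + c / x.2)) ∧
    ¬ ConcaveOn ℝ {x : ℝ × ℝ | 0 < x.1 ∧ 0 < x.2}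
        (fun x : ℝ × ℝ =>
          x.2 * Real.logb 2 (1 + a * x.1 / x.2) - x.2 * Real.logb 2 (1 + c / x.2)) := by
  have ha' : a ≠ 0 := ha.ne'
  have hc' : c ≠ 0 := hc.ne'
  have l2 : Real.logb 2 2 = 1 := Real.logb_self_eq_one (by norm_num)
  have l4 : Real.logb 2 4 = 2 := by
    rw [show (4:ℝ) = 2^2 by norm_num, Real.logb_pow, l2]; norm_num
  constructor
  · intro h
    have hx : ((1/a, 1) : ℝ × ℝ) ∈ {x : ℝ × ℝ | 0 < x.1 ∧ 0 < x.2} :=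
      ⟨by positivity, one_pos⟩
    have hy : ((3/a, 1) : ℝ × ℝ) ∈ {x : ℝ × ℝ | 0 < x.1 ∧ 0 < x.2} :=
      ⟨by positivity, one_pos⟩
    have key := h.2 hx hy (by norm_num : (0:ℝ) ≤ 1/2) (by norm_num : (0:ℝ) ≤ 1/2)
      (by norm_num : (1:ℝ)/2 + 1/2 = 1)
    have hpt : ((1:ℝ)/2) • ((1/a, 1) : ℝ × ℝ) + ((1:ℝ)/2) • ((3/a, 1) : ℝ × ℝ)
        = ((2/a, 1) : ℝ × ℝ) := by
      rw [Prod.ext_iff]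
      constructor <;> simp <;> field_simp <;> ring
    rw [hpt] at key
    simp only [smul_eq_mul] at key
    rw [show 1 + a * (2/a) / 1 = 3 by field_simp; norm_num,
      show 1 + a * (1/a) / 1 = 2 by field_simp; norm_num,
      show 1 + a * (3/a) / 1 = 4 by field_simp; norm_num,
      l2, l4] at key
    have := key1'
    linarith
  · intro h
    have hx : ((c, c) : ℝ × ℝ) ∈ {x : ℝ × ℝ | 0 < x.1 ∧ 0 < x.2} := ⟨hc, hc⟩
    have hy : ((3*c, 3*c) : ℝ × ℝ) ∈ {x : ℝ × ℝ | 0 < x.1 ∧ 0 < x.2} :=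
      ⟨by positivity, by positivity⟩
    have key := h.2 hx hy (by norm_num : (0:ℝ) ≤ 1/2) (by norm_num : (0:ℝ) ≤ 1/2)
      (by norm_num : (1:ℝ)/2 + 1/2 = 1)
    have hpt : ((1:ℝ)/2) • ((c, c) : ℝ × ℝ) + ((1:ℝ)/2) • ((3*c, 3*c) : ℝ × ℝ)
        = ((2*c, 2*c) : ℝ × ℝ) := by
      rw [Prod.ext_iff]
      constructor <;> simp <;> ring
    rw [hpt] at key
    simp only [smul_eq_mul] at key
    rw [show 1 + a * (2*c) / (2*c) = 1 + a by field_simp,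
      show 1 + a * c / c = 1 + a by field_simp,
      show 1 + a * (3*c) / (3*c) = 1 + a by field_simp,
      show 1 + c / (2*c) = 3/2 by field_simp; ring,
      show 1 + c / c = 2 by field_simp; norm_num,
      show 1 + c / (3*c) = 4/3 by field_simp; ring,
      l2] at key
    have := key2'
    nlinarith [mul_pos hc (sub_pos.mpr key2')]
end

section
/- Let a > 0, c > 0 and fix p > 0. Define f(B) = B·ln(1 + a·p/B) − B·ln(1 + c/B) for B > 0. Then f''(B) = −(a·p)²/(B·(B + a·p)²) + c²/(B·(B + c)²) for every B > 0; consequently, if a·p < c then f is strictly convex on (0, ∞), and if a·p > c then f is strictly concave on (0, ∞). -/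
/-!
Each summand `B ↦ B log (1 + t / B)` has second derivative `-t² / (B (B + t)²)`, which is
`-(t / (B + t))² / B`. Since `t ↦ t / (B + t)` is strictly increasing on `[0, ∞)`, the second
derivative of the difference has the sign of `c - a p` at every `B > 0`, and the second-derivative
tests for strict convexity and concavity apply.
-/

open Real Set Filter Topology

section MulLogOneAddDiv

variable {t B : ℝ}

theorem hasDerivAt_log_one_add_div (hB : B ≠ 0) (hBt : B + t ≠ 0) :
    HasDerivAt (fun B => log (1 + t / B)) (-t / (B * (B + t))) B := by
  have hinner : HasDerivAt (fun B => 1 + t / B) (-t / B ^ 2) B := by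
    simpa using ((hasDerivAt_const B t).div (hasDerivAt_id B) hB).const_add 1
  have hpos : 1 + t / B ≠ 0 := by
    rw [one_add_div hB]
    exact div_ne_zero hBt hB
  refine (hinner.log hpos).congr_deriv ?_
  field_simp

theorem hasDerivAt_mul_log_one_add_div (hB : B ≠ 0) (hBt : B + t ≠ 0) :
    HasDerivAt (fun B => B * log (1 + t / B)) (log (1 + t / B) - t / (B + t)) B := by
  refine ((hasDerivAt_id' B).mul (hasDerivAt_log_one_add_div hB hBt)).congr_deriv ?_
  field_simp
  ring

theorem hasDerivAt_log_one_add_div_sub_div (hB : B ≠ 0) (hBt : B + t ≠ 0) :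
    HasDerivAt (fun B => log (1 + t / B) - t / (B + t)) (-t ^ 2 / (B * (B + t) ^ 2)) B := by
  have hfrac := (hasDerivAt_const B t).div ((hasDerivAt_id' B).add_const t) hBt
  refine ((hasDerivAt_log_one_add_div hB hBt).sub hfrac).congr_deriv ?_
  field_simp
  ring

theorem eventually_ne_zero_and_add_ne_zero (hB : B ≠ 0) (hBt : B + t ≠ 0) :
    ∀ᶠ x in 𝓝 B, x ≠ 0 ∧ x + t ≠ 0 :=
  (eventually_ne_nhds hB).and ((continuous_id.add continuous_const).continuousAt.eventually_ne hBt)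

end MulLogOneAddDiv

theorem hasDerivAt_deriv_mul_log_one_add_div_sub {t s B : ℝ} (hB : B ≠ 0) (hBt : B + t ≠ 0)
    (hBs : B + s ≠ 0) :
    HasDerivAt (deriv fun B => B * log (1 + t / B) - B * log (1 + s / B))
      (-t ^ 2 / (B * (B + t) ^ 2) + s ^ 2 / (B * (B + s) ^ 2)) B := by
  have hderiv : (deriv fun B => B * log (1 + t / B) - B * log (1 + s / B)) =ᶠ[𝓝 B]
      fun B => (log (1 + t / B) - t / (B + t)) - (log (1 + s / B) - s / (B + s)) := by
    filter_upwards [eventually_ne_zero_and_add_ne_zero hB hBt,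
      eventually_ne_zero_and_add_ne_zero hB hBs] with x ⟨hx, hxt⟩ ⟨_, hxs⟩
    exact ((hasDerivAt_mul_log_one_add_div hx hxt).sub
      (hasDerivAt_mul_log_one_add_div hx hxs)).deriv
  have h := (hasDerivAt_log_one_add_div_sub_div hB hBt).sub
    (hasDerivAt_log_one_add_div_sub_div hB hBs)
  exact (h.congr_of_eventuallyEq hderiv).congr_deriv (by ring)

theorem sq_div_mul_add_sq_lt {t s B : ℝ} (hB : 0 < B) (ht : 0 ≤ t) (hts : t < s) :
    t ^ 2 / (B * (B + t) ^ 2) < s ^ 2 / (B * (B + s) ^ 2) := by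
  have hs : 0 < s := ht.trans_lt hts
  have hfrac : t / (B + t) < s / (B + s) := by
    rw [div_lt_div_iff₀ (by positivity) (by positivity)]
    nlinarith
  calc t ^ 2 / (B * (B + t) ^ 2) = (t / (B + t)) ^ 2 / B := by field_simp
    _ < (s / (B + s)) ^ 2 / B := by gcongr
    _ = s ^ 2 / (B * (B + s) ^ 2) := by field_simp

/-- Let `a > 0`, `c > 0`, and fix `p > 0`. Define
`f(B) = B * ln (1 + a * p / B) - B * ln (1 + c / B)` for `B > 0`. Then
`f''(B) = -(a*p)² / (B * (B + a*p)²) + c² / (B * (B + c)²)` for every `B > 0`;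
consequently, if `a*p < c` then `f` is strictly convex on `(0, ∞)`, and if `a*p > c`
then `f` is strictly concave on `(0, ∞)`. -/
theorem secrecy_rate_second_deriv_in_B (a c p : ℝ) (ha : 0 < a) (hc : 0 < c) (hp : 0 < p) :
    (∀ B : ℝ, 0 < B →
      deriv (deriv (fun B : ℝ => B * Real.log (1 + a * p / B) - B * Real.log (1 + c / B))) B
        = -(a * p) ^ 2 / (B * (B + a * p) ^ 2) + c ^ 2 / (B * (B + c) ^ 2)) ∧
    (a * p < c →
      StrictConvexOn ℝ (Set.Ioi (0 : ℝ))
        (fun B : ℝ => B * Real.log (1 + a * p / B) - B * Real.log (1 + c / B))) ∧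
    (a * p > c →
      StrictConcaveOn ℝ (Set.Ioi (0 : ℝ))
        (fun B : ℝ => B * Real.log (1 + a * p / B) - B * Real.log (1 + c / B))) := by
  have hap : 0 < a * p := mul_pos ha hp
  have hf'' : ∀ B : ℝ, 0 < B →
      deriv (deriv (fun B : ℝ => B * log (1 + a * p / B) - B * log (1 + c / B))) B
        = -(a * p) ^ 2 / (B * (B + a * p) ^ 2) + c ^ 2 / (B * (B + c) ^ 2) := fun B hB =>
    (hasDerivAt_deriv_mul_log_one_add_div_sub hB.ne' (by positivity) (by positivity)).deriv
  have hcont : ContinuousOn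
      (fun B : ℝ => B * log (1 + a * p / B) - B * log (1 + c / B)) (Ioi 0) := fun B (hB : 0 < B) =>
    ((hasDerivAt_mul_log_one_add_div hB.ne' (by positivity)).sub
      (hasDerivAt_mul_log_one_add_div hB.ne' (by positivity))).continuousAt.continuousWithinAt
  refine ⟨hf'', fun hlt => ?_, fun hgt => ?_⟩
  · refine strictConvexOn_of_deriv2_pos' (convex_Ioi 0) hcont fun B hB => ?_
    rw [Function.iterate_succ_apply, Function.iterate_one, hf'' B hB, neg_div]
    linarith [sq_div_mul_add_sq_lt hB hap.le hlt]
  · refine strictConcaveOn_of_deriv2_neg' (convex_Ioi 0) hcont fun B hB => ?_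
    rw [Function.iterate_succ_apply, Function.iterate_one, hf'' B hB, neg_div]
    linarith [sq_div_mul_add_sq_lt hB hc.le hgt]
end
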